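/- arXiv:1611.07287 — 5 statements merged into one kernel-verified Lean document; each statement's English description precedes it below -/
import Mathlib

section
/- For every nonzero complex number z, |z − 1| ≥ |z|^{1/2} · | z/|z| − 1 |. -/
/-!
Write `x = r u` with `r = ‖x‖` and `‖u‖ = 1`. Expanding both squared norms around the unit
vector `v` gives the exact identity `‖x - v‖² = r ‖u - v‖² + (r - 1)²`, so dropping the square
`(r - 1)²` and taking square roots yields `√r ‖u - v‖ ≤ ‖x - v‖`. For `z : ℂ` take `v = 1`.
-/

section InnerProductSpace

variable {E : Type*} [NormedAddCommGroup E] [InnerProductSpace ℝ E]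

theorem norm_sub_sq_eq_norm_mul_norm_inv_smul_sub_sq_add (x : E) {v : E} (hv : ‖v‖ = 1) :
    ‖x - v‖ ^ 2 = ‖x‖ * ‖‖x‖⁻¹ • x - v‖ ^ 2 + (‖x‖ - 1) ^ 2 := by
  rcases eq_or_ne x 0 with rfl | hx
  · simp [hv]
  have hr : ‖x‖ ≠ 0 := norm_ne_zero_iff.mpr hx
  have hu : ‖‖x‖⁻¹ • x‖ = 1 := by
    rw [norm_smul, norm_inv, norm_norm, inv_mul_cancel₀ hr]
  rw [norm_sub_sq_real, norm_sub_sq_real, hu, hv, real_inner_smul_left]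
  field_simp
  ring

theorem sqrt_norm_mul_norm_inv_smul_sub_le_norm_sub (x : E) {v : E} (hv : ‖v‖ = 1) :
    √‖x‖ * ‖‖x‖⁻¹ • x - v‖ ≤ ‖x - v‖ := by
  refine le_of_pow_le_pow_left₀ two_ne_zero (norm_nonneg _) ?_
  rw [mul_pow, Real.sq_sqrt (norm_nonneg x), norm_sub_sq_eq_norm_mul_norm_inv_smul_sub_sq_add x hv]
  exact le_add_of_nonneg_right (sq_nonneg _)

end InnerProductSpace

theorem stmt_7_general (z : ℂ) :
    Real.sqrt ‖z‖ * ‖z / (‖z‖ : ℂ) - 1‖ ≤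
      ‖z - 1‖ := by
  have hnormalize : z / (‖z‖ : ℂ) = ‖z‖⁻¹ • z := by
    rw [Complex.real_smul, Complex.ofReal_inv, div_eq_inv_mul]
  rw [hnormalize]
  exact sqrt_norm_mul_norm_inv_smul_sub_le_norm_sub z norm_one

/-- For every nonzero complex z, `|z − 1| ≥ |z|^{1/2} · |z/|z| − 1|`. -/
theorem stmt_7 (z : ℂ) (hz : z ≠ 0) :
    Real.sqrt ‖z‖ * ‖z / (‖z‖ : ℂ) - 1‖ ≤
      ‖z - 1‖ :=
  stmt_7_general z
end

section
/- Let α = r·e^{2πiϑ} with r ∈ (0,1] and ϑ ∈ [0,1), and let p ≥ 2 be an integer with |α^p − 1| ≤ 1/2. Then there exists t ∈ {0,…,p} such that |ϑ − t/p| ≤ (1/(4√2))·|α^p − 1|. -/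
/-!
Write `α ^ p = R u` with `R = r ^ p` and `u = e^{2πi pϑ}` on the unit circle. For `R ≥ 0`
one has `‖R u - 1‖² - R ‖u - 1‖² = (R - 1)² ≥ 0`, so `‖α ^ p - 1‖ ≥ √R ‖u - 1‖`, and
`R ≥ 1/2` because `|R - 1| ≤ ‖α ^ p - 1‖ ≤ 1/2`. Jordan's inequality `sin x ≥ 2x/π` on `[0, π/2]` gives
`‖u - 1‖ = 2 |sin (π pϑ)| ≥ 4 |pϑ - t|` for `t` the nearest integer to `pϑ`, which lies in
`[0, p]`. Dividing by `p ≥ 2` gives the bound.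
-/

theorem abs_sub_one_le_norm_ofReal_mul_sub_one {u : ℂ} (hu : ‖u‖ = 1) {R : ℝ}
    (hR : 0 ≤ R) : |R - 1| ≤ ‖(R : ℂ) * u - 1‖ := by
  simpa [norm_mul, hu, abs_of_nonneg hR] using abs_norm_sub_norm_le ((R : ℂ) * u) 1

open Complex in
theorem sqrt_mul_norm_sub_one_le_norm_ofReal_mul_sub_one {u : ℂ} (hu : ‖u‖ = 1) {R : ℝ}
    (hR : 0 ≤ R) : √R * ‖u - 1‖ ≤ ‖(R : ℂ) * u - 1‖ := by
  have hunit : u.re ^ 2 + u.im ^ 2 = 1 := by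
    have := Complex.sq_norm u
    rw [hu, normSq_apply] at this
    linarith
  apply le_of_pow_le_pow_left₀ two_ne_zero (norm_nonneg _)
  rw [mul_pow, Real.sq_sqrt hR, Complex.sq_norm, Complex.sq_norm, normSq_apply, normSq_apply]
  simp only [sub_re, sub_im, mul_re, mul_im, ofReal_re, ofReal_im, one_re, one_im]
  nlinarith [sq_nonneg (R - 1)]

open Complex Real in
theorem four_mul_abs_sub_round_le_norm_exp_sub_one (θ : ℝ) :
    4 * |θ - round θ| ≤ ‖exp (2 * π * I * θ) - 1‖ := by
  set δ := θ - round θ with hδ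
  have hexp : exp (2 * π * I * θ) = exp (I * ↑(2 * π * δ)) := by
    rw [show 2 * π * I * θ = I * ↑(2 * π * δ) + round θ * (2 * π * I) by
        rw [hδ]; push_cast; ring,
      Complex.exp_add, exp_int_mul_two_pi_mul_I, mul_one]
  have hπδ : |π * δ| ≤ π / 2 := by
    rw [abs_mul, abs_of_pos pi_pos]
    nlinarith [abs_sub_round θ, pi_pos]
  calc 4 * |δ| = 2 * (2 / π * |π * δ|) := by
        rw [abs_mul, abs_of_pos pi_pos]; field_simp; ring
    _ ≤ 2 * Real.sin |π * δ| := by gcongr; exact mul_le_sin (abs_nonneg _) hπδ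
    _ = ‖exp (2 * π * I * θ) - 1‖ := by
      rw [hexp, norm_exp_I_mul_ofReal_sub_one, norm_mul, Real.norm_eq_abs,
        ← abs_sin_eq_sin_abs_of_abs_le_pi (by linarith [pi_pos]),
        show 2 * π * δ / 2 = π * δ by ring]
      norm_num

theorem exists_natCast_eq_round {x : ℝ} {n : ℕ} (h0 : 0 ≤ x) (hn : x ≤ n) :
    ∃ t : ℕ, t ≤ n ∧ (t : ℝ) = round x := by
  have hround0 : 0 ≤ round x := by
    rw [round_eq]; exact Int.floor_nonneg.mpr (by linarith)
  have hroundn : round x ≤ n := by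
    rw [← round_natCast (α := ℝ) n, round_eq, round_eq]; exact Int.floor_mono (by linarith)
  refine ⟨(round x).toNat, by omega, ?_⟩
  rw [← Int.cast_natCast, Int.toNat_of_nonneg hround0]

theorem stmt_8_general (r ϑ : ℝ) (hr0 : 0 < r) (hϑ0 : 0 ≤ ϑ) (hϑ1 : ϑ < 1)
    (α : ℂ) (hα : α = (r : ℂ) * Complex.exp (2 * Real.pi * Complex.I * ϑ))
    (p : ℕ) (hp : 2 ≤ p) (hsmall : ‖α ^ p - 1‖ ≤ 1 / 2) :
    ∃ t : ℕ, t ≤ p ∧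
      |ϑ - (t : ℝ) / p| ≤ (1 / (4 * Real.sqrt 2)) * ‖α ^ p - 1‖ := by
  have hαp :
      α ^ p = ((r ^ p : ℝ) : ℂ) * Complex.exp (2 * Real.pi * Complex.I * (p * ϑ : ℝ)) := by
    rw [hα, mul_pow, ← Complex.exp_nat_mul]; push_cast; ring_nf
  set u := Complex.exp (2 * Real.pi * Complex.I * (p * ϑ : ℝ))
  have hu : ‖u‖ = 1 := by simp [u, Complex.norm_exp]
  have hR : 1 / 2 ≤ r ^ p := by
    have := (abs_sub_one_le_norm_ofReal_mul_sub_one hu (by positivity)).trans (hαp ▸ hsmall)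
    linarith [abs_le.mp this]
  obtain ⟨t, htp, ht⟩ := exists_natCast_eq_round (x := p * ϑ) (by positivity) (by nlinarith)
  refine ⟨t, htp, ?_⟩
  have hsqrt : √2 / 2 ≤ √(r ^ p) := by
    rw [Real.le_sqrt (by positivity) (by positivity), div_pow, Real.sq_sqrt zero_le_two]; linarith
  have key : √2 / 2 * (4 * |p * ϑ - t|) ≤ ‖α ^ p - 1‖ := calc
    _ ≤ √(r ^ p) * ‖u - 1‖ := by
      rw [ht]; gcongr; exact four_mul_abs_sub_round_le_norm_exp_sub_one _
    _ ≤ ‖α ^ p - 1‖ :=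
      hαp ▸ sqrt_mul_norm_sub_one_le_norm_ofReal_mul_sub_one hu (by positivity)
  have hp0 : (0 : ℝ) < p := by positivity
  calc |ϑ - t / p| = |p * ϑ - t| / p := by
        rw [show ϑ - t / p = (p * ϑ - t) / p by field_simp, abs_div, abs_of_pos hp0]
    _ ≤ |p * ϑ - t| / 2 := by gcongr; exact_mod_cast hp
    _ = 1 / (4 * √2) * (√2 / 2 * (4 * |p * ϑ - t|)) := by field_simp
    _ ≤ 1 / (4 * √2) * ‖α ^ p - 1‖ := by gcongr

/-- Let α = r·e^{2πiϑ} with r ∈ (0,1], ϑ ∈ [0,1), and p ≥ 2 an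
integer with |α^p − 1| ≤ 1/2. Then there is t ∈ {0,…,p} with
|ϑ − t/p| ≤ (1/(4√2))·|α^p − 1|. -/
theorem stmt_8 (r ϑ : ℝ) (hr0 : 0 < r) (hr1 : r ≤ 1) (hϑ0 : 0 ≤ ϑ) (hϑ1 : ϑ < 1)
    (α : ℂ) (hα : α = (r : ℂ) * Complex.exp (2 * Real.pi * Complex.I * ϑ))
    (p : ℕ) (hp : 2 ≤ p) (hsmall : ‖α ^ p - 1‖ ≤ 1 / 2) :
    ∃ t : ℕ, t ≤ p ∧
      |ϑ - (t : ℝ) / p| ≤ (1 / (4 * Real.sqrt 2)) * ‖α ^ p - 1‖ :=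
  stmt_8_general r ϑ hr0 hϑ0 hϑ1 α hα p hp hsmall
end

section
/- Let α = r·e^{2πiϑ} with r ∈ (0,1], ϑ ∈ [0,1), let p ≥ 2 be an integer with |α^p − 1| ≤ 1/2, let a = (a₁,…,aₙ) ∈ ℤⁿ, and set P_a(X) = 1 + X^{a₁} + ⋯ + X^{aₙ}. If P_a(α) = 0, then there exists t ∈ {0,…,p} such that |P_a(e^{2πit/p})| ≤ 5·n·|a|·|α^p − 1|, where |a| = max_i |a_i|. -/
open Finset Complex
open scoped Real

/-!
A root `α` of `P_a` satisfies `α^e P_a(α) = 0` for a shift `e` making all exponents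
nonnegative, so `‖P_a(ξ)‖ = ‖ξ^e P_a(ξ) - α^e P_a(α)‖` is at most the sum of the exponents
times `‖ξ - α‖` whenever `‖ξ‖ = 1 ≥ ‖α‖`. It remains to find a `p`-th root of unity `ξ` with
`p ‖ξ - α‖ = O(‖α^p - 1‖)`: the modulus of `α` is close to `1` because `1 - r^p ≥ p r^p (1 - r)`,
and `ξ = e^{2πi t/p}` with `t` the integer nearest to `pϑ` is close to `e^{2πiϑ}` because
`‖e^{2πipϑ} - 1‖ = 2 |sin (π (pϑ - t))|` and `|sin x| ≥ 5|x|/6` for `|x| ≤ π/6`.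
-/

lemma norm_pow_sub_pow_le_of_norm_le_one {R : Type*} [NormedCommRing R] [NormOneClass R]
    {x y : R} (hx : ‖x‖ ≤ 1) (hy : ‖y‖ ≤ 1) (k : ℕ) :
    ‖x ^ k - y ^ k‖ ≤ k * ‖x - y‖ := by
  rw [← geom_sum₂_mul]
  refine (norm_mul_le _ _).trans (mul_le_mul_of_nonneg_right ?_ (norm_nonneg _))
  calc ‖∑ i ∈ range k, x ^ i * y ^ (k - 1 - i)‖
      ≤ ∑ i ∈ range k, ‖x ^ i * y ^ (k - 1 - i)‖ := norm_sum_le _ _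
    _ ≤ ∑ _i ∈ range k, (1 : ℝ) := sum_le_sum fun i _ =>
        (norm_mul_le _ _).trans <| mul_le_one₀
          ((norm_pow_le _ _).trans (pow_le_one₀ (norm_nonneg _) hx)) (norm_nonneg _)
          ((norm_pow_le _ _).trans (pow_le_one₀ (norm_nonneg _) hy))
    _ = k := by simp

lemma mul_pow_mul_one_sub_le_one_sub_pow {r : ℝ} (hr0 : 0 ≤ r) (hr1 : r ≤ 1) (p : ℕ) :
    p * r ^ p * (1 - r) ≤ 1 - r ^ p := by
  calc p * r ^ p * (1 - r) = (∑ _k ∈ range p, r ^ p) * (1 - r) := by simp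
    _ ≤ (∑ k ∈ range p, r ^ k) * (1 - r) := mul_le_mul_of_nonneg_right
        (sum_le_sum fun k hk => pow_le_pow_of_le_one hr0 hr1 (mem_range.1 hk).le) (by linarith)
    _ = 1 - r ^ p := geom_sum_mul_neg r p

section NormedDivisionRing

variable {𝕜 : Type*} [NormedDivisionRing 𝕜]

lemma one_sub_norm_pow_le_norm_pow_sub_one (z : 𝕜) (p : ℕ) : 1 - ‖z‖ ^ p ≤ ‖z ^ p - 1‖ := by
  simpa [norm_pow, norm_sub_rev] using norm_sub_norm_le (1 : 𝕜) (z ^ p)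

lemma mul_one_sub_norm_le {z : 𝕜} (hz : ‖z‖ ≤ 1) {p : ℕ} (h : ‖z ^ p - 1‖ ≤ 1 / 2) :
    p * (1 - ‖z‖) ≤ 2 * ‖z ^ p - 1‖ := by
  have hpow := one_sub_norm_pow_le_norm_pow_sub_one z p
  have hgeom := mul_pow_mul_one_sub_le_one_sub_pow (norm_nonneg z) hz p
  have hp : 0 ≤ (p : ℝ) * (1 - ‖z‖) := mul_nonneg p.cast_nonneg (by linarith)
  nlinarith

end NormedDivisionRing

lemma norm_exp_two_pi_I_mul_sub_one (x : ℝ) :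
    ‖exp (2 * π * I * x) - 1‖ = 2 * |Real.sin (π * x)| := by
  rw [show 2 * π * I * x = I * ((2 * π * x : ℝ) : ℂ) by push_cast; ring,
    norm_exp_I_mul_ofReal_sub_one, norm_mul, Real.norm_eq_abs, Real.norm_eq_abs, abs_two]
  ring_nf

lemma norm_exp_two_pi_I_mul_sub_exp_le (x y : ℝ) :
    ‖exp (2 * π * I * x) - exp (2 * π * I * y)‖ ≤ 2 * π * |x - y| := by
  have hfactor : exp (2 * π * I * x) - exp (2 * π * I * y)
      = exp (2 * π * I * y) * (exp (I * ((2 * π * (x - y) : ℝ) : ℂ)) - 1) := by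
    rw [mul_sub, ← exp_add, mul_one]; push_cast; ring_nf
  rw [hfactor, norm_mul, show 2 * π * I * y = ((2 * π * y : ℝ) : ℂ) * I by push_cast; ring,
    norm_exp_ofReal_mul_I, one_mul]
  refine Real.norm_exp_I_mul_ofReal_sub_one_le.trans_eq ?_
  rw [Real.norm_eq_abs, abs_mul, abs_of_pos Real.two_pi_pos]

lemma five_sixths_mul_abs_le_abs_sin {x : ℝ} (hx : |x| ≤ π / 2) (h : |Real.sin x| ≤ 1 / 2) :
    5 / 6 * |x| ≤ |Real.sin x| := by
  rw [Real.abs_sin_eq_sin_abs_of_abs_le_pi (hx.trans (by linarith [Real.pi_pos]))] at h ⊢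
  set s := |x|
  have hs : s ≤ π / 6 := by
    by_contra! hlt
    have := Real.sin_lt_sin_of_lt_of_le_pi_div_two (by linarith [Real.pi_pos]) hx hlt
    rw [Real.sin_pi_div_six] at this
    linarith
  rcases (abs_nonneg x).eq_or_lt with hs0 | hs0
  · simp [s, ← hs0]
  · have hcube := Real.sin_gt_sub_cube hs0
    have hs1 : s ≤ 1 := by linarith [Real.pi_le_four]
    nlinarith [mul_nonneg hs0.le (mul_nonneg hs0.le (sub_nonneg.2 hs1))]

lemma round_mono {α : Type*} [Field α] [LinearOrder α] [IsStrictOrderedRing α] [FloorRing α] :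
    Monotone (round : α → ℤ) := fun x y hxy => by
  simp only [round_eq]
  exact Int.floor_mono (by linarith)

lemma mul_norm_exp_sub_exp_round_le (ϑ : ℝ) {p : ℕ} (hp : 0 < p)
    (h : ‖exp (2 * π * I * ϑ) ^ p - 1‖ ≤ 1) :
    p * ‖exp (2 * π * I * ϑ) - exp (2 * π * I * (round (p * ϑ) : ℤ) / p)‖
      ≤ 6 / 5 * ‖exp (2 * π * I * ϑ) ^ p - 1‖ := by
  set d := p * ϑ - round (p * ϑ)
  have hpR : (0 : ℝ) < p := by exact_mod_cast hp
  have hpow : exp (2 * π * I * ϑ) ^ p = exp (2 * π * I * d) := by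
    rw [← exp_nat_mul, show (p : ℂ) * (2 * π * I * ϑ)
        = 2 * π * I * d + (round (p * ϑ) : ℤ) * (2 * π * I) by push_cast [d]; ring,
      exp_add, exp_int_mul_two_pi_mul_I, mul_one]
  have hround : exp (2 * π * I * (round (p * ϑ) : ℤ) / p)
      = exp (2 * π * I * ((round (p * ϑ) : ℤ) / p : ℝ)) := by
    push_cast; ring_nf
  have hdist : ϑ - (round (p * ϑ) : ℤ) / p = d / p := by simp only [d]; field_simp
  have hd : |π * d| ≤ π / 2 := by
    rw [abs_mul, abs_of_pos Real.pi_pos]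
    nlinarith [abs_sub_round (p * ϑ), Real.pi_pos]
  rw [hpow, norm_exp_two_pi_I_mul_sub_one] at h ⊢
  have hsin := five_sixths_mul_abs_le_abs_sin hd (by linarith)
  calc p * ‖exp (2 * π * I * ϑ) - exp (2 * π * I * (round (p * ϑ) : ℤ) / p)‖
      ≤ p * (2 * π * |d / p|) := by
        rw [hround, ← hdist]
        exact mul_le_mul_of_nonneg_left (norm_exp_two_pi_I_mul_sub_exp_le _ _) hpR.le
    _ = 2 * |π * d| := by
        rw [abs_div, abs_of_pos hpR, abs_mul, abs_of_pos Real.pi_pos]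
        field_simp
    _ ≤ 6 / 5 * (2 * |Real.sin (π * d)|) := by linarith

lemma exists_mul_norm_exp_sub_le {r ϑ : ℝ} (hr0 : 0 ≤ r) (hr1 : r ≤ 1) (hϑ0 : 0 ≤ ϑ)
    (hϑ1 : ϑ ≤ 1) {p : ℕ} (hp : 0 < p)
    (h : ‖((r : ℂ) * exp (2 * π * I * ϑ)) ^ p - 1‖ ≤ 1 / 2) :
    ∃ t : ℕ, t ≤ p ∧ p * ‖exp (2 * π * I * t / p) - r * exp (2 * π * I * ϑ)‖
      ≤ 22 / 5 * ‖((r : ℂ) * exp (2 * π * I * ϑ)) ^ p - 1‖ := by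
  set u := exp (2 * π * I * ϑ)
  set δ := ‖((r : ℂ) * u) ^ p - 1‖
  have hu : ‖u‖ = 1 := by simp [u, norm_exp]
  have hα : ‖(r : ℂ) * u‖ = r := by rw [norm_mul, hu, norm_real, Real.norm_of_nonneg hr0, mul_one]
  have hradial : p * ‖u - r * u‖ ≤ 2 * δ := by
    rw [show u - r * u = ((1 - r : ℝ) : ℂ) * u by push_cast; ring, norm_mul, hu, mul_one,
      norm_real, Real.norm_of_nonneg (by linarith), ← hα]
    exact mul_one_sub_norm_le (hα.trans_le hr1) h
  have hup : ‖u ^ p - 1‖ ≤ 2 * δ := by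
    have hpow := one_sub_norm_pow_le_norm_pow_sub_one ((r : ℂ) * u) p
    rw [hα] at hpow
    calc ‖u ^ p - 1‖ ≤ ‖u ^ p - ((r : ℂ) * u) ^ p‖ + δ := norm_sub_le_norm_sub_add_norm_sub _ _ _
      _ = (1 - r ^ p) + δ := by
        rw [mul_pow, ← ofReal_pow, show u ^ p - (r ^ p : ℝ) * u ^ p
            = ((1 - r ^ p : ℝ) : ℂ) * u ^ p by push_cast; ring, norm_mul, norm_pow, hu, one_pow,
          mul_one, norm_real, Real.norm_of_nonneg (by linarith [pow_le_one₀ hr0 hr1 (n := p)])]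
      _ ≤ 2 * δ := by linarith
  have hangular := mul_norm_exp_sub_exp_round_le ϑ hp (by linarith)
  have hpR : (0 : ℝ) < p := by exact_mod_cast hp
  have hlo : 0 ≤ round ((p : ℝ) * ϑ) :=
    round_zero (α := ℝ) ▸ round_mono (mul_nonneg hpR.le hϑ0)
  have hhi : round ((p : ℝ) * ϑ) ≤ p :=
    round_natCast (α := ℝ) p ▸ round_mono (mul_le_of_le_one_right hpR.le hϑ1)
  refine ⟨(round ((p : ℝ) * ϑ)).toNat, by omega, ?_⟩
  rw [show (((round ((p : ℝ) * ϑ)).toNat : ℕ) : ℂ) = ((round ((p : ℝ) * ϑ) : ℤ) : ℂ) by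
    exact_mod_cast Int.toNat_of_nonneg hlo]
  calc p * ‖exp (2 * π * I * (round ((p : ℝ) * ϑ) : ℤ) / p) - r * u‖
      ≤ p * ‖u - exp (2 * π * I * (round ((p : ℝ) * ϑ) : ℤ) / p)‖ + p * ‖u - r * u‖ := by
        rw [← mul_add, norm_sub_rev u]
        exact mul_le_mul_of_nonneg_left (norm_sub_le_norm_sub_add_norm_sub _ _ _) p.cast_nonneg
    _ ≤ 22 / 5 * δ := by linarith

section Shift

variable {ι : Type*} [Fintype ι] [Nonempty ι] {a : ι → ℤ} {A : ℕ}

/-- Shifting by `e = maxᵢ (-aᵢ)⁺` makes the exponents nonnegative; the index attaining the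
maximum contributes only `|aᵢ|` to `e + ∑ᵢ Kᵢ`, every other index at most `2A`. -/
lemma exists_shift_sum_le (hA : ∀ i, |a i| ≤ A) :
    ∃ (e : ℕ) (K : ι → ℕ), (∀ i, (K i : ℤ) = e + a i) ∧
      e + ∑ i, K i + A ≤ 2 * Fintype.card ι * A := by
  classical
  obtain ⟨i₀, -, he⟩ := exists_mem_eq_sup univ univ_nonempty fun i => (-a i).toNat
  set e := univ.sup fun i => (-a i).toNat
  have hle : ∀ i, -a i ≤ e := fun i =>
    (Int.self_le_toNat _).trans (by exact_mod_cast le_sup (f := fun i => (-a i).toNat) (mem_univ i))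
  set K : ι → ℕ := fun i => (e + a i).toNat
  have hK : ∀ i, (K i : ℤ) = e + a i := fun i => Int.toNat_of_nonneg (by linarith [hle i])
  refine ⟨e, K, hK, ?_⟩
  have hai₀ := abs_le.1 (hA i₀)
  have hi₀ : e + K i₀ ≤ A := by
    have := hK i₀
    omega
  have hrest : ∀ i, K i ≤ 2 * A := fun i => by
    have := hK i
    have := abs_le.1 (hA i)
    omega
  calc e + ∑ i, K i + A = (e + K i₀) + ∑ i ∈ univ.erase i₀, K i + A := by
        rw [← add_sum_erase _ _ (mem_univ i₀)]; ring
    _ ≤ 2 * A + ∑ _i ∈ univ.erase i₀, 2 * A := by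
        linarith [sum_le_sum fun i (_ : i ∈ univ.erase i₀) => hrest i]
    _ = 2 * Fintype.card ι * A := by
        rw [add_sum_erase _ (fun _ => 2 * A) (mem_univ i₀), sum_const, card_univ, smul_eq_mul]
        ring

lemma norm_one_add_sum_zpow_le {𝕜 : Type*} [NormedField 𝕜] (hA : ∀ i, |a i| ≤ A) {z ξ : 𝕜}
    (hz0 : z ≠ 0) (hz : ‖z‖ ≤ 1) (hξ : ‖ξ‖ = 1) (hroot : 1 + ∑ i, z ^ a i = 0) :
    ‖1 + ∑ i, ξ ^ a i‖ ≤ (2 * Fintype.card ι - 1) * A * ‖ξ - z‖ := by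
  obtain ⟨e, K, hK, hsum⟩ := exists_shift_sum_le hA
  have hshift : ∀ w : 𝕜, w ≠ 0 → w ^ e * (1 + ∑ i, w ^ a i) = w ^ e + ∑ i, w ^ K i :=
    fun w hw => by
      simp only [mul_add, mul_one, mul_sum, ← zpow_natCast, ← zpow_add₀ hw, hK]
  have hz_shift : z ^ e + ∑ i, z ^ K i = 0 := by rw [← hshift z hz0, hroot, mul_zero]
  have hξ0 : ξ ≠ 0 := norm_ne_zero_iff.1 (by rw [hξ]; exact one_ne_zero)
  have hsumR : (e : ℝ) + ∑ i, (K i : ℝ) ≤ (2 * Fintype.card ι - 1) * A := by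
    have : ((e + ∑ i, K i + A : ℕ) : ℝ) ≤ (2 * Fintype.card ι * A : ℕ) := by exact_mod_cast hsum
    push_cast at this
    linarith
  calc ‖1 + ∑ i, ξ ^ a i‖ = ‖ξ ^ e * (1 + ∑ i, ξ ^ a i)‖ := by
        rw [norm_mul, norm_pow, hξ, one_pow, one_mul]
    _ = ‖(ξ ^ e - z ^ e) + ∑ i, (ξ ^ K i - z ^ K i)‖ := by
        rw [hshift ξ hξ0, sum_sub_distrib]
        congr 1
        linear_combination hz_shift
    _ ≤ ‖ξ ^ e - z ^ e‖ + ∑ i, ‖ξ ^ K i - z ^ K i‖ :=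
        (norm_add_le _ _).trans (by gcongr; exact norm_sum_le _ _)
    _ ≤ e * ‖ξ - z‖ + ∑ i, K i * ‖ξ - z‖ :=
        add_le_add (norm_pow_sub_pow_le_of_norm_le_one hξ.le hz e)
          (sum_le_sum fun i _ => norm_pow_sub_pow_le_of_norm_le_one hξ.le hz (K i))
    _ = (e + ∑ i, (K i : ℝ)) * ‖ξ - z‖ := by rw [add_mul, sum_mul]
    _ ≤ (2 * Fintype.card ι - 1) * A * ‖ξ - z‖ := by gcongr

end Shift

/-- Let α = r·e^{2πiϑ}, r ∈ (0,1], ϑ ∈ [0,1), p ≥ 2 with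
|α^p − 1| ≤ 1/2, and a ∈ ℤⁿ with `P_a(α) = 1 + α^{a₁} + ⋯ + α^{aₙ} = 0`. Then
there is t ∈ {0,…,p} with `|P_a(e^{2πit/p})| ≤ 5·n·|a|·|α^p − 1|`, where
|a| = maxᵢ |aᵢ|. -/
theorem stmt_9 {n : ℕ} (a : Fin n → ℤ)
    (r ϑ : ℝ) (hr0 : 0 < r) (hr1 : r ≤ 1) (hϑ0 : 0 ≤ ϑ) (hϑ1 : ϑ < 1)
    (α : ℂ) (hα : α = (r : ℂ) * Complex.exp (2 * Real.pi * Complex.I * ϑ))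
    (p : ℕ) (hp : 2 ≤ p) (hsmall : ‖α ^ p - 1‖ ≤ 1 / 2)
    (hroot : 1 + ∑ i : Fin n, α ^ (a i) = 0) :
    ∃ t : ℕ, t ≤ p ∧
      ‖1 + ∑ i : Fin n,
          Complex.exp (2 * Real.pi * Complex.I * t / p) ^ (a i)‖ ≤
        5 * n * ((Finset.univ.sup fun i => (a i).natAbs : ℕ) : ℝ) *
          ‖α ^ p - 1‖ := by
  set A := univ.sup fun i => (a i).natAbs
  have hA : ∀ i, |a i| ≤ A := fun i => by
    rw [Int.abs_eq_natAbs]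
    exact_mod_cast le_sup (f := fun i => (a i).natAbs) (mem_univ i)
  have hne : Nonempty (Fin n) := Fin.pos_iff_nonempty.1 <| Nat.pos_of_ne_zero <| by
    rintro rfl
    simp at hroot
  subst hα
  obtain ⟨t, htp, hclose⟩ := exists_mul_norm_exp_sub_le hr0.le hr1 hϑ0 hϑ1.le (by omega) hsmall
  refine ⟨t, htp, ?_⟩
  have hnorm : ‖(r : ℂ) * exp (2 * π * I * ϑ)‖ ≤ 1 := by simpa [norm_exp, abs_of_pos hr0] using hr1
  have hbound := norm_one_add_sum_zpow_le hA
    (mul_ne_zero (ofReal_ne_zero.2 hr0.ne') (exp_ne_zero _)) hnorm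
    (by simp [norm_exp] : ‖exp (2 * π * I * t / p)‖ = 1) hroot
  rw [Fintype.card_fin] at hbound
  set δ := ‖((r : ℂ) * exp (2 * π * I * ϑ)) ^ p - 1‖
  set D := ‖exp (2 * π * I * t / p) - r * exp (2 * π * I * ϑ)‖
  have hD : D ≤ 11 / 5 * δ := by
    have hpR : (2 : ℝ) ≤ p := by exact_mod_cast hp
    nlinarith [(norm_nonneg _ : 0 ≤ D)]
  have hn : (1 : ℝ) ≤ n := by exact_mod_cast Fin.pos_iff_nonempty.2 hne
  calc _ ≤ (2 * n - 1) * A * D := hbound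
    _ ≤ (2 * n - 1) * A * (11 / 5 * δ) := by gcongr; nlinarith [A.cast_nonneg (α := ℝ)]
    _ ≤ 5 * n * A * δ := by nlinarith [mul_nonneg A.cast_nonneg (norm_nonneg _ : 0 ≤ δ)]
end

section
/- Let b ≥ 0 be an integer, ψ ∈ C^b(ℝ) and g ∈ C^b(ℝⁿ) with finite C^b-norms |ψ|_{C^b} and |g|_{C^b}. Then the composition ψ∘g lies in C^b(ℝⁿ) and |ψ∘g|_{C^b} ≤ 2^{b(b−1)/2} · |ψ|_{C^b} · max{1, |g|_{C^b}}^b. -/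
/-!
Differentiating a term `ψ⁽ʳ⁾(g) · ∏ᵢ ∂_{Lᵢ} g` with `r` factors in a coordinate direction `j`
gives, by the chain rule, one term with the new factor `∂_j g`, and, by the product rule, `r`
terms in which `j` is added to one of the blocks `Lᵢ`. So `∂_l (ψ ∘ g)` is a sum of such terms
with at most `|l|` factors, each of order at most `|l|`, and each term is bounded by
`|ψ|_{C^b} · max 1 |g|_{C^b} ^ b`. Passing from order `k` to `k + 1` multiplies the number of
terms by at most `1 + k ≤ 2 ^ k`, so there are at most `2 ^ (k (k - 1) / 2)` terms of order `k`.
-/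

/-- Iterated partial derivative of `g : ℝⁿ → ℝ` along a list of coordinate
directions. -/
noncomputable def partialIter {n : ℕ} : List (Fin n) → ((Fin n → ℝ) → ℝ) → ((Fin n → ℝ) → ℝ)
  | [] => id
  | j :: l => fun g x => fderiv ℝ (partialIter l g) x (Pi.single j 1)

section Blocks

variable {α : Type*}

def consAtEach (j : α) : List (List α) → List (List (List α))
  | [] => []
  | L :: Ls => ((j :: L) :: Ls) :: (consAtEach j Ls).map (L :: ·)

/-- A list of blocks `Ls` stands for the term `ψ⁽|Ls|⁾(g) · ∏_{L ∈ Ls} ∂_L g`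
(see `faaDiBrunoTerm`); `faaDiBrunoBlocks l` lists the terms of `∂_l (ψ ∘ g)`, with repetitions. -/
def faaDiBrunoBlocks : List α → List (List (List α))
  | [] => [[]]
  | j :: l => (faaDiBrunoBlocks l).flatMap fun Ls => ([j] :: Ls) :: consAtEach j Ls

theorem length_consAtEach (j : α) (Ls : List (List α)) :
    (consAtEach j Ls).length = Ls.length := by
  induction Ls with
  | nil => rfl
  | cons L Ls ih => simp [consAtEach, ih]

theorem length_of_mem_consAtEach {j : α} {Ls Ls' : List (List α)} (h : Ls' ∈ consAtEach j Ls) :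
    Ls'.length = Ls.length := by
  induction Ls generalizing Ls' with
  | nil => simp [consAtEach] at h
  | cons L Ls ih =>
    simp only [consAtEach, List.mem_cons, List.mem_map] at h
    rcases h with rfl | ⟨Ls'', hLs'', rfl⟩
    · rfl
    · simp [ih hLs'']

theorem length_le_of_mem_of_mem_consAtEach {j : α} {k : ℕ} {Ls Ls' : List (List α)}
    (hk : ∀ L ∈ Ls, L.length ≤ k) (h : Ls' ∈ consAtEach j Ls) : ∀ L ∈ Ls', L.length ≤ k + 1 := by
  induction Ls generalizing Ls' with
  | nil => simp [consAtEach] at h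
  | cons L Ls ih =>
    simp only [List.mem_cons, forall_eq_or_imp] at hk
    simp only [consAtEach, List.mem_cons, List.mem_map] at h
    rcases h with rfl | ⟨Ls'', hLs'', rfl⟩
    · simp only [List.mem_cons, forall_eq_or_imp, List.length_cons]
      exact ⟨by omega, fun M hM => (hk.2 M hM).trans k.le_succ⟩
    · simp only [List.mem_cons, forall_eq_or_imp]
      exact ⟨hk.1.trans k.le_succ, ih hk.2 hLs''⟩

theorem length_le_of_mem_faaDiBrunoBlocks {l : List α} {Ls : List (List α)}
    (h : Ls ∈ faaDiBrunoBlocks l) : Ls.length ≤ l.length ∧ ∀ L ∈ Ls, L.length ≤ l.length := by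
  induction l generalizing Ls with
  | nil => simp_all [faaDiBrunoBlocks]
  | cons j l ih =>
    simp only [faaDiBrunoBlocks, List.mem_flatMap, List.mem_cons] at h
    obtain ⟨Ls₀, hLs₀, rfl | hLs⟩ := h
    · obtain ⟨hlen, hblocks⟩ := ih hLs₀
      simp only [List.length_cons, List.mem_cons, forall_eq_or_imp]
      exact ⟨by omega, by simp, fun L hL => (hblocks L hL).trans l.length.le_succ⟩
    · obtain ⟨hlen, hblocks⟩ := ih hLs₀
      exact ⟨(length_of_mem_consAtEach hLs).trans_le (hlen.trans l.length.le_succ),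
        length_le_of_mem_of_mem_consAtEach hblocks hLs⟩

theorem length_faaDiBrunoBlocks_le (l : List α) :
    (faaDiBrunoBlocks l).length ≤ 2 ^ (l.length * (l.length - 1) / 2) := by
  induction l with
  | nil => simp [faaDiBrunoBlocks]
  | cons j l ih =>
    have hsucc : ∀ Ls ∈ faaDiBrunoBlocks l,
        (([j] :: Ls) :: consAtEach j Ls).length ≤ 2 ^ l.length := by
      intro Ls hLs
      have := (length_le_of_mem_faaDiBrunoBlocks hLs).1
      have := l.length.lt_two_pow_self
      simp only [List.length_cons, length_consAtEach]
      omega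
    calc (faaDiBrunoBlocks (j :: l)).length
        ≤ (faaDiBrunoBlocks l).length • 2 ^ l.length := by
          rw [faaDiBrunoBlocks, List.length_flatMap]
          refine (List.sum_le_card_nsmul _ _ ?_).trans_eq (by rw [List.length_map])
          simpa only [List.mem_map, forall_exists_index, and_imp, forall_apply_eq_imp_iff₂]
            using hsucc
      _ ≤ 2 ^ (l.length * (l.length - 1) / 2) * 2 ^ l.length := Nat.mul_le_mul_right _ ih
      _ = 2 ^ ((j :: l).length * ((j :: l).length - 1) / 2) := by
          rw [← pow_add, List.length_cons, Nat.triangle_succ]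

end Blocks

section ListCalculus

variable {ι 𝕜 E F : Type*} [NontriviallyNormedField 𝕜] [NormedAddCommGroup E] [NormedSpace 𝕜 E]
  [NormedAddCommGroup F] [NormedSpace 𝕜 F]

theorem HasFDerivAt.list_sum {ts : List ι} {f : ι → E → F} {f' : ι → E →L[𝕜] F} {x : E}
    (h : ∀ i ∈ ts, HasFDerivAt (f i) (f' i) x) :
    HasFDerivAt (fun y => (ts.map (f · y)).sum) (ts.map f').sum x := by
  induction ts with
  | nil => exact hasFDerivAt_const 0 x
  | cons i ts ih =>
    simp only [List.map_cons, List.sum_cons, List.forall_mem_cons] at h ⊢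
    exact h.1.add (ih h.2)

theorem fderiv_list_sum_apply {ts : List ι} {f : ι → E → F} {x : E}
    (h : ∀ i ∈ ts, DifferentiableAt 𝕜 (f i) x) (v : E) :
    fderiv 𝕜 (fun y => (ts.map (f · y)).sum) x v =
      (ts.map fun i => fderiv 𝕜 (f i) x v).sum := by
  rw [(HasFDerivAt.list_sum fun i hi => (h i hi).hasFDerivAt).fderiv,
    ← ContinuousLinearMap.apply_apply v, map_list_sum, List.map_map]
  rfl

end ListCalculus

theorem abs_list_prod_le_pow_length {M : ℝ} {xs : List ℝ} (h : ∀ a ∈ xs, |a| ≤ M) :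
    |xs.prod| ≤ M ^ xs.length := by
  induction xs with
  | nil => simp
  | cons a xs ih =>
    rw [List.forall_mem_cons] at h
    rw [List.prod_cons, abs_mul, List.length_cons, pow_succ']
    exact mul_le_mul h.1 (ih h.2) (abs_nonneg _) ((abs_nonneg a).trans h.1)

theorem abs_list_sum_le_length_mul {C : ℝ} {xs : List ℝ} (h : ∀ a ∈ xs, |a| ≤ C) :
    |xs.sum| ≤ xs.length * C := by
  induction xs with
  | nil => simp
  | cons a xs ih =>
    rw [List.forall_mem_cons] at h
    rw [List.sum_cons, List.length_cons, Nat.cast_succ]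
    linarith [abs_add_le a xs.sum, ih h.2, h.1]

section FaaDiBruno

variable {n b : ℕ} {ψ : ℝ → ℝ} {g : (Fin n → ℝ) → ℝ}

theorem partialIter_cons (j : Fin n) (l : List (Fin n)) (x : Fin n → ℝ) :
    partialIter (j :: l) g x = fderiv ℝ (partialIter l g) x (Pi.single j 1) :=
  rfl

theorem ContDiff.contDiff_partialIter (hg : ContDiff ℝ b g) {l : List (Fin n)}
    (hl : l.length ≤ b) : ContDiff ℝ (b - l.length : ℕ) (partialIter l g) := by
  induction l with
  | nil => simpa [partialIter] using hg
  | cons j l ih =>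
    have hl' : l.length < b := hl
    have hsucc : b - (j :: l).length + 1 = b - l.length := by simp only [List.length_cons]; omega
    exact ((ih hl'.le).fderiv_right (by exact_mod_cast hsucc.le)).clm_apply contDiff_const

theorem ContDiff.differentiable_partialIter (hg : ContDiff ℝ b g) {l : List (Fin n)}
    (hl : l.length < b) : Differentiable ℝ (partialIter l g) :=
  (hg.contDiff_partialIter hl.le).differentiable (by exact_mod_cast (by omega : b - l.length ≠ 0))

noncomputable def blockProd (g : (Fin n → ℝ) → ℝ) (Ls : List (List (Fin n))) (x : Fin n → ℝ) :
    ℝ :=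
  (Ls.map (partialIter · g x)).prod

noncomputable def faaDiBrunoTerm (ψ : ℝ → ℝ) (g : (Fin n → ℝ) → ℝ) (Ls : List (List (Fin n)))
    (x : Fin n → ℝ) : ℝ :=
  iteratedDeriv Ls.length ψ (g x) * blockProd g Ls x

theorem blockProd_nil : blockProd g [] = fun _ => 1 := rfl

theorem blockProd_cons (L : List (Fin n)) (Ls : List (List (Fin n))) :
    blockProd g (L :: Ls) = fun x => partialIter L g x * blockProd g Ls x :=
  rfl

theorem ContDiff.differentiable_blockProd (hg : ContDiff ℝ b g) {Ls : List (List (Fin n))}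
    (hLs : ∀ L ∈ Ls, L.length < b) : Differentiable ℝ (blockProd g Ls) := by
  induction Ls with
  | nil => exact differentiable_const 1
  | cons L Ls ih =>
    rw [List.forall_mem_cons] at hLs
    rw [blockProd_cons]
    exact (hg.differentiable_partialIter hLs.1).mul (ih hLs.2)

theorem differentiable_faaDiBrunoTerm (hψ : ContDiff ℝ b ψ) (hg : ContDiff ℝ b g)
    {Ls : List (List (Fin n))} (hlen : Ls.length < b) (hLs : ∀ L ∈ Ls, L.length < b) :
    Differentiable ℝ (faaDiBrunoTerm ψ g Ls) :=
  ((hψ.differentiable_iteratedDeriv _ (by exact_mod_cast hlen)).comp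
    (hg.differentiable (by exact_mod_cast (by omega : b ≠ 0)))).mul
    (hg.differentiable_blockProd hLs)

theorem fderiv_blockProd_apply (hg : ContDiff ℝ b g) (j : Fin n) {Ls : List (List (Fin n))}
    (hLs : ∀ L ∈ Ls, L.length < b) (x : Fin n → ℝ) :
    fderiv ℝ (blockProd g Ls) x (Pi.single j 1) =
      ((consAtEach j Ls).map (blockProd g · x)).sum := by
  induction Ls with
  | nil => simp [blockProd_nil, consAtEach]
  | cons L Ls ih =>
    rw [List.forall_mem_cons] at hLs
    rw [blockProd_cons, fderiv_fun_mul (hg.differentiable_partialIter hLs.1 x)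
      (hg.differentiable_blockProd hLs.2 x)]
    simp only [add_apply, smul_apply, smul_eq_mul,
      ih hLs.2, consAtEach, List.map_cons, List.map_map, List.sum_cons, Function.comp_def,
      blockProd_cons, List.sum_map_mul_left]
    rw [← partialIter_cons]
    ring

theorem fderiv_faaDiBrunoTerm_apply (hψ : ContDiff ℝ b ψ) (hg : ContDiff ℝ b g) (j : Fin n)
    {Ls : List (List (Fin n))} (hlen : Ls.length < b) (hLs : ∀ L ∈ Ls, L.length < b)
    (x : Fin n → ℝ) :
    fderiv ℝ (faaDiBrunoTerm ψ g Ls) x (Pi.single j 1) =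
      ((([j] :: Ls) :: consAtEach j Ls).map (faaDiBrunoTerm ψ g · x)).sum := by
  have hψ' : HasDerivAt (iteratedDeriv Ls.length ψ)
      (iteratedDeriv (Ls.length + 1) ψ (g x)) (g x) := by
    rw [iteratedDeriv_succ]
    exact (hψ.differentiable_iteratedDeriv _ (by exact_mod_cast hlen) _).hasDerivAt
  have hg' := (hg.differentiable (by exact_mod_cast (by omega : b ≠ 0)) x).hasFDerivAt
  have hP := (hg.differentiable_blockProd hLs x).hasFDerivAt
  have hT : HasFDerivAt (faaDiBrunoTerm ψ g Ls) (iteratedDeriv Ls.length ψ (g x) •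
      fderiv ℝ (blockProd g Ls) x +
        blockProd g Ls x • iteratedDeriv (Ls.length + 1) ψ (g x) • fderiv ℝ g x) x :=
    (hψ'.comp_hasFDerivAt x hg').mul hP
  rw [hT.fderiv]
  simp only [add_apply, smul_apply, smul_eq_mul, fderiv_blockProd_apply hg j hLs x]
  have hsame : ∀ Ls' ∈ consAtEach j Ls,
      faaDiBrunoTerm ψ g Ls' x = iteratedDeriv Ls.length ψ (g x) * blockProd g Ls' x :=
    fun Ls' h => by rw [faaDiBrunoTerm, length_of_mem_consAtEach h]
  rw [List.map_cons, List.sum_cons, List.map_congr_left hsame, List.sum_map_mul_left]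
  change _ = iteratedDeriv (Ls.length + 1) ψ (g x) * (fderiv ℝ g x (Pi.single j 1) *
    blockProd g Ls x) + _
  ring

theorem abs_faaDiBrunoTerm_le {Ls : List (List (Fin n))} {x : Fin n → ℝ} {Mψ M : ℝ}
    (hψ : |iteratedDeriv Ls.length ψ (g x)| ≤ Mψ) (hg : ∀ L ∈ Ls, |partialIter L g x| ≤ M) :
    |faaDiBrunoTerm ψ g Ls x| ≤ Mψ * M ^ Ls.length := by
  have hprod : |blockProd g Ls x| ≤ M ^ Ls.length := by
    rw [blockProd, ← Ls.length_map (partialIter · g x)]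
    exact abs_list_prod_le_pow_length (by simpa using hg)
  rw [faaDiBrunoTerm, abs_mul]
  exact mul_le_mul hψ hprod (abs_nonneg _) ((abs_nonneg _).trans hψ)

theorem partialIter_comp_eq_sum (hψ : ContDiff ℝ b ψ) (hg : ContDiff ℝ b g) {l : List (Fin n)}
    (hl : l.length ≤ b) :
    partialIter l (ψ ∘ g) = fun x => ((faaDiBrunoBlocks l).map (faaDiBrunoTerm ψ g · x)).sum := by
  induction l with
  | nil => funext x; simp [partialIter, faaDiBrunoBlocks, faaDiBrunoTerm, blockProd]
  | cons j l ih =>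
    have hl' : l.length < b := hl
    have hsmall : ∀ Ls ∈ faaDiBrunoBlocks l, Ls.length < b ∧ ∀ L ∈ Ls, L.length < b := by
      intro Ls h
      obtain ⟨hlen, hblocks⟩ := length_le_of_mem_faaDiBrunoBlocks h
      exact ⟨hlen.trans_lt hl', fun L hL => (hblocks L hL).trans_lt hl'⟩
    funext x
    rw [partialIter_cons, ih hl'.le, fderiv_list_sum_apply fun Ls h =>
      (differentiable_faaDiBrunoTerm hψ hg (hsmall Ls h).1 (hsmall Ls h).2).differentiableAt,
      List.map_congr_left fun Ls h =>
        fderiv_faaDiBrunoTerm_apply hψ hg j (hsmall Ls h).1 (hsmall Ls h).2 x]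
    simp [faaDiBrunoBlocks, List.flatMap, List.sum_flatten, Function.comp_def]

end FaaDiBruno

/-- Let b ≥ 0, ψ ∈ C^b(ℝ) and g ∈ C^b(ℝⁿ) with finite C^b-norms
(bounded by Mψ and Mg respectively: all derivatives up to order b are bounded).
Then ψ∘g ∈ C^b(ℝⁿ) and |ψ∘g|_{C^b} ≤ 2^{b(b−1)/2}·|ψ|_{C^b}·max{1,|g|_{C^b}}^b. -/
theorem stmt_13 {n b : ℕ} (ψ : ℝ → ℝ) (g : (Fin n → ℝ) → ℝ)
    (hψ : ContDiff ℝ b ψ) (hg : ContDiff ℝ b g)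
    (Mψ Mg : ℝ)
    (hMψ : ∀ i ≤ b, ∀ t : ℝ, |iteratedDeriv i ψ t| ≤ Mψ)
    (hMg : ∀ l : List (Fin n), l.length ≤ b → ∀ x, |partialIter l g x| ≤ Mg) :
    ContDiff ℝ b (ψ ∘ g) ∧
    ∀ l : List (Fin n), l.length ≤ b → ∀ x,
      |partialIter l (ψ ∘ g) x| ≤
        2 ^ (b * (b - 1) / 2) * Mψ * max 1 Mg ^ b := by
  refine ⟨hψ.comp hg, fun l hl x => ?_⟩
  have hMψ0 : 0 ≤ Mψ := (abs_nonneg _).trans (hMψ 0 b.zero_le 0)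
  have hcount : ((faaDiBrunoBlocks l).length : ℝ) ≤ 2 ^ (b * (b - 1) / 2) := by
    exact_mod_cast (length_faaDiBrunoBlocks_le l).trans <| Nat.pow_le_pow_right two_pos <|
      Nat.div_le_div_right <| Nat.mul_le_mul hl <| Nat.sub_le_sub_right hl 1
  have hterm : ∀ Ls ∈ faaDiBrunoBlocks l, |faaDiBrunoTerm ψ g Ls x| ≤ Mψ * max 1 Mg ^ b := by
    intro Ls h
    obtain ⟨hlen, hblocks⟩ := length_le_of_mem_faaDiBrunoBlocks h
    refine (abs_faaDiBrunoTerm_le (hMψ _ (hlen.trans hl) _)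
      fun L hL => (hMg L ((hblocks L hL).trans hl) x).trans (le_max_right 1 Mg)).trans ?_
    exact mul_le_mul_of_nonneg_left (pow_le_pow_right₀ (le_max_left 1 Mg) (hlen.trans hl)) hMψ0
  rw [partialIter_comp_eq_sum hψ hg hl]
  calc _ ≤ (faaDiBrunoBlocks l).length * (Mψ * max 1 Mg ^ b) := by
        simpa using abs_list_sum_le_length_mul (xs := (faaDiBrunoBlocks l).map _)
          (by simpa using hterm)
    _ ≤ 2 ^ (b * (b - 1) / 2) * Mψ * max 1 Mg ^ b := by
        rw [mul_assoc]; exact mul_le_mul_of_nonneg_right hcount (by positivity)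
end

section
/- Let p be a prime, f an odd prime dividing p − 1, G ⊂ 𝔽_p^× the subgroup of order f, and A₁,…,A_k ∈ 𝔽_p^× a complete set of representatives of 𝔽_p^×/G, where k = (p−1)/f. Then #{(x₁,…,x_k) ∈ G^k : A₁x₁ + ⋯ + A_k x_k = 0} − f^k/p = ((p−1)/p)·Δ, where Δ = ∏_{t ∈ 𝔽_p^×/G} (Σ_{g∈G} ζ^{tg}) with ζ = e^{2πi/p}. -/
/-!
Detecting `∑ Aᵢxᵢ = 0` by orthogonality of additive characters gives
`p · N = ∑_{t ∈ 𝔽_p} ∏ᵢ η(t Aᵢ)` with `η(a) = ∑_{g ∈ G} ζ^{ag}` a Gauss period. The term `t = 0` is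
`f^k`. For `t ≠ 0`, `η` is constant on cosets of `G` and `t` permutes the cosets, so the product
over the representatives `Aᵢ` is the same `Δ` for each of the `p - 1` units `t`.
-/

open Finset Function

lemma AddChar.map_sum_eq_prod {A M ι : Type*} [AddCommMonoid A] [CommMonoid M]
    (ψ : AddChar A M) (s : Finset ι) (a : ι → A) : ψ (∑ i ∈ s, a i) = ∏ i ∈ s, ψ (a i) := by
  classical
  induction s using Finset.induction_on with
  | empty => simp
  | insert i s hi ih => rw [sum_insert hi, prod_insert hi, ψ.map_add_eq_mul, ih]

lemma AddChar.card_zeroSet_mul_card_eq_sum {R X : Type*} [CommRing R] [Fintype R] [Fintype X]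
    {ψ : AddChar R ℂ} (hψ : ψ.IsPrimitive) (S : X → R) :
    (Nat.card {x // S x = 0} : ℂ) * Fintype.card R = ∑ x, ∑ t, ψ (t * S x) := by
  classical
  simp_rw [AddChar.sum_mulShift _ hψ]
  simp [Finset.sum_ite, Nat.card_eq_fintype_card, Fintype.card_subtype]

lemma Fintype.sum_eq_add_sum_units {K M : Type*} [GroupWithZero K] [Fintype K] [DecidableEq K]
    [AddCommMonoid M] (h : K → M) : ∑ t, h t = h 0 + ∑ u : Kˣ, h u := by
  rw [Fintype.sum_eq_add_sum_subtype_ne _ 0]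
  congr 1
  exact (Fintype.sum_equiv unitsEquivNeZero _ _ fun _ ↦ rfl).symm

lemma QuotientGroup.prod_mul_left_of_bijective_mk {M β ι : Type*} [Group M] [CommMonoid β]
    [Fintype ι] {H : Subgroup M} {A : ι → M} (hA : Bijective fun i ↦ (A i : M ⧸ H))
    {F : M → β} (hF : ∀ a b : M, (a : M ⧸ H) = b → F a = F b) (u : M) :
    ∏ i, F (u * A i) = ∏ i, F (A i) := by
  let e := Equiv.ofBijective _ hA
  refine Fintype.prod_equiv (e.trans ((MulAction.toPerm u).trans e.symm)) _ _ fun i ↦ hF _ _ ?_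
  exact (e.apply_symm_apply (u • (A i : M ⧸ H))).symm

section GaussPeriod

variable {R : Type*} [CommRing R] (ψ : AddChar R ℂ) (G : Subgroup Rˣ) [Fintype G]

noncomputable def gaussPeriod (a : R) : ℂ := ∑ g : G, ψ (a * (g : Rˣ))

lemma gaussPeriod_zero : gaussPeriod ψ G 0 = Fintype.card G := by
  simp [gaussPeriod]

lemma gaussPeriod_mul_of_mem (a : R) {h : Rˣ} (hh : h ∈ G) :
    gaussPeriod ψ G (a * h) = gaussPeriod ψ G a := by
  refine Fintype.sum_equiv (Equiv.mulLeft ⟨h, hh⟩) _ _ fun g ↦ ?_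
  simp [mul_assoc]

lemma gaussPeriod_eq_of_mk_eq {u v : Rˣ} (huv : (u : Rˣ ⧸ G) = v) :
    gaussPeriod ψ G u = gaussPeriod ψ G v := by
  rw [QuotientGroup.eq] at huv
  rw [← gaussPeriod_mul_of_mem ψ G (u : R) huv, ← Units.val_mul, mul_inv_cancel_left]

lemma sum_addChar_mul_sum_eq_prod_gaussPeriod {ι : Type*} [Fintype ι] [DecidableEq ι]
    (a : ι → R) (t : R) :
    ∑ x : ι → G, ψ (t * ∑ i, a i * (x i : Rˣ)) = ∏ i, gaussPeriod ψ G (t * a i) := by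
  simp_rw [gaussPeriod, Fintype.prod_sum, mul_sum, ψ.map_sum_eq_prod, mul_assoc]

end GaussPeriod

theorem card_sum_eq_zero_mul_card_eq {K ι : Type*} [Field K] [Fintype K] [DecidableEq K]
    [Fintype ι] [DecidableEq ι] {ψ : AddChar K ℂ} (hψ : ψ.IsPrimitive) (G : Subgroup Kˣ)
    [Fintype G] {A : ι → Kˣ} (hA : Bijective fun i ↦ (A i : Kˣ ⧸ G)) :
    (Nat.card {x : ι → G // ∑ i, (A i : K) * (x i : Kˣ) = 0} : ℂ) * Fintype.card K =
      (Fintype.card G : ℂ) ^ Fintype.card ι +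
        ((Fintype.card K : ℂ) - 1) * ∏ i, gaussPeriod ψ G (A i) := by
  have hunits (u : Kˣ) : ∏ i, gaussPeriod ψ G (u * A i) = ∏ i, gaussPeriod ψ G (A i) := by
    simpa only [Units.val_mul] using QuotientGroup.prod_mul_left_of_bijective_mk hA
      (F := fun v : Kˣ ↦ gaussPeriod ψ G v) (fun _ _ ↦ gaussPeriod_eq_of_mk_eq ψ G) u
  rw [ψ.card_zeroSet_mul_card_eq_sum hψ, sum_comm]
  simp_rw [sum_addChar_mul_sum_eq_prod_gaussPeriod]
  rw [Fintype.sum_eq_add_sum_units]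
  simp_rw [zero_mul, gaussPeriod_zero, prod_const, hunits, sum_const, card_univ,
    Fintype.card_units, nsmul_eq_mul, Nat.cast_sub Fintype.card_pos, Nat.cast_one]

theorem stmt_16_general (p f : ℕ) [hp : Fact p.Prime]
    (G : Subgroup (ZMod p)ˣ) [Fintype G] (hG : Nat.card G = f)
    (k : ℕ)
    (A : Fin k → (ZMod p)ˣ)
    (hA : Function.Bijective (fun i : Fin k => (QuotientGroup.mk (A i) : (ZMod p)ˣ ⧸ G))) :
    (Nat.card {x : Fin k → G //
        ∑ i : Fin k, ((A i : (ZMod p)ˣ) : ZMod p) * (((x i : (ZMod p)ˣ)) : ZMod p) = 0} : ℂ)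
      - (f : ℂ) ^ k / p =
    (((p : ℂ) - 1) / p) *
      ∏ i : Fin k, ∑ g : G,
        Complex.exp (2 * Real.pi * Complex.I *
          (((A i * (g : (ZMod p)ˣ) : (ZMod p)ˣ) : ZMod p).val : ℕ) / p) := by
  have hcount := card_sum_eq_zero_mul_card_eq (ZMod.isPrimitive_stdAddChar p) G hA
  rw [ZMod.card, Fintype.card_fin, ← Nat.card_eq_fintype_card, hG] at hcount
  have hΔ (i : Fin k) : gaussPeriod ZMod.stdAddChar G (A i) = ∑ g : G,
      Complex.exp (2 * Real.pi * Complex.I *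
        (((A i * (g : (ZMod p)ˣ) : (ZMod p)ˣ) : ZMod p).val : ℕ) / p) := by
    simp_rw [gaussPeriod, ZMod.stdAddChar_apply, ZMod.toCircle_apply, Units.val_mul]
  have hp0 : (p : ℂ) ≠ 0 := Nat.cast_ne_zero.mpr hp.out.ne_zero
  simp_rw [← hΔ, (eq_div_iff hp0).mpr hcount]
  ring

/-- Let p be a prime, f an odd prime dividing p − 1,
G ⊂ 𝔽_p^× the subgroup of order f, k = (p−1)/f, and A₁,…,A_k a complete set of
representatives of 𝔽_p^×/G. Then
`#{x ∈ G^k : A₁x₁ + ⋯ + A_kx_k = 0} − f^k/p = ((p−1)/p)·Δ`, where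
`Δ = ∏_{t ∈ 𝔽_p^×/G} (Σ_{g∈G} ζ^{tg})` with ζ = e^{2πi/p}. -/
theorem stmt_16 (p f : ℕ) [hp : Fact p.Prime] (hf : f.Prime) (hodd : Odd f)
    (hdvd : f ∣ p - 1)
    (G : Subgroup (ZMod p)ˣ) [Fintype G] (hG : Nat.card G = f)
    (k : ℕ) (hk : k = (p - 1) / f)
    (A : Fin k → (ZMod p)ˣ)
    (hA : Function.Bijective (fun i : Fin k => (QuotientGroup.mk (A i) : (ZMod p)ˣ ⧸ G))) :
    (Nat.card {x : Fin k → G //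
        ∑ i : Fin k, ((A i : (ZMod p)ˣ) : ZMod p) * (((x i : (ZMod p)ˣ)) : ZMod p) = 0} : ℂ)
      - (f : ℂ) ^ k / p =
    (((p : ℂ) - 1) / p) *
      ∏ i : Fin k, ∑ g : G,
        Complex.exp (2 * Real.pi * Complex.I *
          (((A i * (g : (ZMod p)ˣ) : (ZMod p)ˣ) : ZMod p).val : ℕ) / p) :=
  stmt_16_general p f (hp := hp) G hG k A hA
end
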